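/- Fix integers K ≥ 1 and 0 = L_0 < L_1 < ⋯ < L_K = I with group sizes I_k = L_k − L_{k−1} ≥ 2, real data x_1,…,x_I, and constants n > 0 and σ̂ > 0. For ν = (ν_1,…,ν_K) ∈ ℝ^K and ρ = (ρ_1,…,ρ_K) ∈ [0,1)^K define f(ν,ρ) = ∏_{k=1}^K ((1+(I_k−1)ρ_k)(1−ρ_k)^{I_k−1})^{−1/2} · exp(−(n/(2σ̂²)) Σ_{k=1}^K [ (1/(1−ρ_k)) Σ_{i=L_{k−1}+1}^{L_k}(x_i−ν_k)² − (ρ_k/((1+(I_k−1)ρ_k)(1−ρ_k))) ( Σ_{i=L_{k−1}+1}^{L_k}(x_i−ν_k) )² ]). Then the two evidential values Ṽ = inf_{ν∈ℝ^K} [ sup_{ρ∈(0,1)^K} f(ν,ρ) / f(ν,0) ] and V = [ sup_{ρ∈(0,1)^K, ν∈ℝ^K} f(ν,ρ) ] / [ sup_{ν∈ℝ^K} f(ν,0) ] are equal: Ṽ = V. -/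

import Mathlib

/-! Completing the square in each group splits the exponent of `fDensity` into its value at the
group means `ν̂` plus the penalty `m_k (x̄_k - ν_k)² / (1 + (m_k - 1) ρ_k)`. The penalty is
nonnegative and nonincreasing in `ρ_k`, so `f(ν, ρ) ≤ f(ν̂, ρ)` and
`f(ν, ρ) / f(ν, 0) ≥ f(ν̂, ρ) / f(ν̂, 0)`. Hence `ν̂` attains both suprema in `V` and the infimum
in `Ṽ`, and both sides equal `sup_ρ f(ν̂, ρ) / f(ν̂, 0)`. -/
open Real Set

/-- The joint density (up to the constant factor `(n/(2πσ̂²))^{I/2}`, which cancels in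
all ratios) of the cell averages `x₁,…,x_I` of an ANOVA study with `K` groups of cells,
group `k` consisting of cells `L_{k-1}+1,…,L_k`, with group means `ν_k` and
within-group equicorrelations `ρ_k`. -/
noncomputable def fDensity (K : ℕ) (L : Fin (K + 1) → ℕ) (x : ℕ → ℝ) (n σ : ℝ)
    (ν ρ : Fin K → ℝ) : ℝ :=
  (∏ k : Fin K,
      ((1 + ((L k.succ - L k.castSucc : ℕ) - 1 : ℝ) * ρ k) *
          (1 - ρ k) ^ (L k.succ - L k.castSucc - 1)) ^ (-(1 : ℝ) / 2)) *
    Real.exp (-(n / (2 * σ ^ 2)) *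
      ∑ k : Fin K,
        ((1 / (1 - ρ k)) *
            ∑ i ∈ Finset.Ioc (L k.castSucc) (L k.succ), (x i - ν k) ^ 2 -
          (ρ k / ((1 + ((L k.succ - L k.castSucc : ℕ) - 1 : ℝ) * ρ k) * (1 - ρ k))) *
            (∑ i ∈ Finset.Ioc (L k.castSucc) (L k.succ), (x i - ν k)) ^ 2))

open scoped Finset BigOperators

section Profile

variable {N R : Type*} {F : N → R → ℝ} {Ω : Set R} {ν₀ : N} {ρ₀ : R}

theorem sSup_image_prod_eq_sSup_image (hle : ∀ ν, ∀ ρ ∈ Ω, F ν ρ ≤ F ν₀ ρ) :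
    sSup ((fun p : N × R => F p.1 p.2) '' {p | p.2 ∈ Ω}) = sSup (F ν₀ '' Ω) :=
  csSup_eq_csSup_of_forall_exists_le
    (by rintro _ ⟨⟨ν, ρ⟩, hρ, rfl⟩; exact ⟨F ν₀ ρ, mem_image_of_mem _ hρ, hle ν ρ hρ⟩)
    (by rintro _ ⟨ρ, hρ, rfl⟩; exact ⟨F ν₀ ρ, ⟨(ν₀, ρ), hρ, rfl⟩, le_rfl⟩)

theorem sSup_image_div_le_sSup_image_div (hΩ : Ω.Nonempty) (hpos : ∀ ν, 0 < F ν ρ₀)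
    (hle : ∀ ν, ∀ ρ ∈ Ω, F ν ρ ≤ F ν₀ ρ)
    (hcross : ∀ ν, ∀ ρ ∈ Ω, F ν₀ ρ * F ν ρ₀ ≤ F ν ρ * F ν₀ ρ₀) (ν : N) :
    sSup (F ν₀ '' Ω) / F ν₀ ρ₀ ≤ sSup (F ν '' Ω) / F ν ρ₀ := by
  by_cases hbdd : BddAbove (F ν '' Ω)
  · rw [div_le_div_iff₀ (hpos ν₀) (hpos ν), ← le_div_iff₀ (hpos ν), mul_div_assoc]
    refine csSup_le (hΩ.image _) ?_
    rintro _ ⟨ρ, hρ, rfl⟩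
    rw [← mul_div_assoc, le_div_iff₀ (hpos ν)]
    exact (hcross ν ρ hρ).trans <|
      mul_le_mul_of_nonneg_right (le_csSup hbdd (mem_image_of_mem _ hρ)) (hpos ν₀).le
  · -- `sSup` of an unbounded set of reals is `0`, and `hle` transfers unboundedness to `F ν₀`.
    have hbdd₀ : ¬ BddAbove (F ν₀ '' Ω) := fun ⟨b, hb⟩ ↦ hbdd
      ⟨b, by rintro _ ⟨ρ, hρ, rfl⟩; exact (hle ν ρ hρ).trans (hb (mem_image_of_mem _ hρ))⟩
    rw [Real.sSup_of_not_bddAbove hbdd, Real.sSup_of_not_bddAbove hbdd₀, zero_div, zero_div]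

theorem sInf_sSup_div_eq_sSup_div_sSup (hΩ : Ω.Nonempty) (hpos : ∀ ν, 0 < F ν ρ₀)
    (hle : ∀ ν, ∀ ρ ∈ Ω, F ν ρ ≤ F ν₀ ρ) (hle₀ : ∀ ν, F ν ρ₀ ≤ F ν₀ ρ₀)
    (hcross : ∀ ν, ∀ ρ ∈ Ω, F ν₀ ρ * F ν ρ₀ ≤ F ν ρ * F ν₀ ρ₀) :
    sInf (range fun ν ↦ sSup (F ν '' Ω) / F ν ρ₀) =
      sSup ((fun p : N × R => F p.1 p.2) '' {p | p.2 ∈ Ω}) / sSup (range fun ν ↦ F ν ρ₀) := by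
  have hden : sSup (range fun ν ↦ F ν ρ₀) = F ν₀ ρ₀ :=
    IsGreatest.csSup_eq ⟨mem_range_self ν₀, forall_mem_range.2 hle₀⟩
  rw [hden, sSup_image_prod_eq_sSup_image hle]
  exact IsLeast.csInf_eq ⟨mem_range_self ν₀, forall_mem_range.2 <|
    sSup_image_div_le_sSup_image_div hΩ hpos hle hcross⟩

end Profile

section EquicorrQuadForm

variable {ι : Type*} (t : Finset ι) (x : ι → ℝ)

/-- `(x - ν𝟙)ᵀ Σ⁻¹ (x - ν𝟙)` on the cells `t`, for the equicorrelation matrix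
`Σ = (1 - ρ) I + ρ 𝟙𝟙ᵀ`. -/
noncomputable def equicorrQuadForm (ρ ν : ℝ) : ℝ :=
  1 / (1 - ρ) * ∑ i ∈ t, (x i - ν) ^ 2 -
    ρ / ((1 + (#t - 1) * ρ) * (1 - ρ)) * (∑ i ∈ t, (x i - ν)) ^ 2

noncomputable def equicorrMeanPenalty (ρ ν : ℝ) : ℝ :=
  #t * ((𝔼 i ∈ t, x i) - ν) ^ 2 / (1 + (#t - 1) * ρ)

theorem sum_sub_eq_card_mul_expect_sub (ν : ℝ) :
    ∑ i ∈ t, (x i - ν) = #t * ((𝔼 i ∈ t, x i) - ν) := by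
  rw [Finset.sum_sub_distrib, ← Finset.card_smul_expect, Finset.sum_const, nsmul_eq_mul,
    nsmul_eq_mul, mul_sub]

theorem sum_sq_sub_eq_sum_sq_sub_expect_add (ν : ℝ) :
    ∑ i ∈ t, (x i - ν) ^ 2 =
      ∑ i ∈ t, (x i - 𝔼 j ∈ t, x j) ^ 2 + #t * ((𝔼 i ∈ t, x i) - ν) ^ 2 := by
  set μ := 𝔼 i ∈ t, x i
  have hdev : ∑ i ∈ t, (x i - μ) = 0 := by
    rw [sum_sub_eq_card_mul_expect_sub, sub_self, mul_zero]
  calc ∑ i ∈ t, (x i - ν) ^ 2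
      = ∑ i ∈ t, ((x i - μ) ^ 2 + 2 * (μ - ν) * (x i - μ) + (μ - ν) ^ 2) :=
        Finset.sum_congr rfl fun i _ ↦ by ring
    _ = ∑ i ∈ t, (x i - μ) ^ 2 + #t * (μ - ν) ^ 2 := by
        rw [Finset.sum_add_distrib, Finset.sum_add_distrib, ← Finset.mul_sum, hdev,
          Finset.sum_const, nsmul_eq_mul]
        ring

theorem equicorrQuadForm_eq_add {ρ : ℝ} (hρ : ρ ≠ 1) (hd : 1 + (#t - 1) * ρ ≠ 0) (ν : ℝ) :
    equicorrQuadForm t x ρ ν =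
      equicorrQuadForm t x ρ (𝔼 i ∈ t, x i) + equicorrMeanPenalty t x ρ ν := by
  have h1ρ : 1 - ρ ≠ 0 := sub_ne_zero.2 hρ.symm
  simp only [equicorrQuadForm, equicorrMeanPenalty]
  rw [sum_sq_sub_eq_sum_sq_sub_expect_add t x ν, sum_sub_eq_card_mul_expect_sub,
    sum_sub_eq_card_mul_expect_sub, sub_self, mul_zero]
  generalize (#t : ℝ) = m at hd ⊢
  generalize hd' : 1 + (m - 1) * ρ = d at hd ⊢
  field_simp
  linear_combination (-(m * ((𝔼 i ∈ t, x i) - ν) ^ 2)) * hd'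

variable {t x}

theorem one_add_card_sub_one_mul_pos {ρ : ℝ} (hρ : ρ ∈ Ico (0 : ℝ) 1) :
    0 < 1 + ((#t : ℝ) - 1) * ρ := by
  nlinarith [hρ.2, mul_nonneg (#t).cast_nonneg hρ.1]

theorem equicorrMeanPenalty_nonneg {ρ : ℝ} (hρ : ρ ∈ Ico (0 : ℝ) 1) (ν : ℝ) :
    0 ≤ equicorrMeanPenalty t x ρ ν :=
  div_nonneg (by positivity) (one_add_card_sub_one_mul_pos hρ).le

theorem equicorrMeanPenalty_le_equicorrMeanPenalty_zero {ρ : ℝ} (hρ : 0 ≤ ρ) (ν : ℝ) :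
    equicorrMeanPenalty t x ρ ν ≤ equicorrMeanPenalty t x 0 ν := by
  rw [equicorrMeanPenalty, equicorrMeanPenalty, mul_zero, add_zero, div_one]
  rcases t.eq_empty_or_nonempty with rfl | ht
  · simp
  · have : (1 : ℝ) ≤ #t := by exact_mod_cast ht.card_pos
    exact div_le_self (by positivity) (by nlinarith)

end EquicorrQuadForm

section Density

variable {K : ℕ} {L : Fin (K + 1) → ℕ} {x : ℕ → ℝ} {n σ : ℝ}

noncomputable def groupMean (L : Fin (K + 1) → ℕ) (x : ℕ → ℝ) (k : Fin K) : ℝ :=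
  𝔼 i ∈ Finset.Ioc (L k.castSucc) (L k.succ), x i

noncomputable def meanPenalty (L : Fin (K + 1) → ℕ) (x : ℕ → ℝ) (ν ρ : Fin K → ℝ) : ℝ :=
  ∑ k, equicorrMeanPenalty (Finset.Ioc (L k.castSucc) (L k.succ)) x (ρ k) (ν k)

theorem fDensity_pos (ν : Fin K → ℝ) {ρ : Fin K → ℝ} (hρ : ∀ k, ρ k ∈ Ico (0 : ℝ) 1) :
    0 < fDensity K L x n σ ν ρ := by
  refine mul_pos (Finset.prod_pos fun k _ ↦ rpow_pos_of_pos ?_ _) (exp_pos _)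
  refine mul_pos ?_ (pow_pos (sub_pos.2 (hρ k).2) _)
  simpa only [Nat.card_Ioc] using
    one_add_card_sub_one_mul_pos (t := Finset.Ioc (L k.castSucc) (L k.succ)) (hρ k)

theorem fDensity_eq_mul_exp (ν : Fin K → ℝ) {ρ : Fin K → ℝ} (hρ : ∀ k, ρ k ∈ Ico (0 : ℝ) 1) :
    fDensity K L x n σ ν ρ =
      fDensity K L x n σ (groupMean L x) ρ * exp (-(n / (2 * σ ^ 2)) * meanPenalty L x ν ρ) := by
  -- Folding the exponent into `equicorrQuadForm` needs the group sizes as `#(Finset.Ioc _ _)`.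
  have hgroup (k : Fin K) := equicorrQuadForm_eq_add (Finset.Ioc (L k.castSucc) (L k.succ)) x
    (hρ k).2.ne (one_add_card_sub_one_mul_pos (hρ k)).ne' (ν k)
  simp only [fDensity, ← Nat.card_Ioc, ← equicorrQuadForm.eq_1, hgroup, meanPenalty, groupMean,
    Finset.sum_add_distrib, mul_add, exp_add, mul_assoc]

theorem meanPenalty_nonneg (ν : Fin K → ℝ) {ρ : Fin K → ℝ} (hρ : ∀ k, ρ k ∈ Ico (0 : ℝ) 1) :
    0 ≤ meanPenalty L x ν ρ :=
  Finset.sum_nonneg fun k _ ↦ equicorrMeanPenalty_nonneg (hρ k) (ν k)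

theorem meanPenalty_le_meanPenalty_zero (ν : Fin K → ℝ) {ρ : Fin K → ℝ} (hρ : ∀ k, 0 ≤ ρ k) :
    meanPenalty L x ν ρ ≤ meanPenalty L x ν 0 :=
  Finset.sum_le_sum fun k _ ↦ equicorrMeanPenalty_le_equicorrMeanPenalty_zero (hρ k) (ν k)

theorem fDensity_le_fDensity_groupMean (hn : 0 ≤ n) (ν : Fin K → ℝ) {ρ : Fin K → ℝ}
    (hρ : ∀ k, ρ k ∈ Ico (0 : ℝ) 1) :
    fDensity K L x n σ ν ρ ≤ fDensity K L x n σ (groupMean L x) ρ := by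
  have hc : 0 ≤ n / (2 * σ ^ 2) := by positivity
  rw [fDensity_eq_mul_exp ν hρ]
  refine mul_le_of_le_one_right (fDensity_pos _ hρ).le (exp_le_one_iff.2 ?_)
  rw [neg_mul, neg_nonpos]
  exact mul_nonneg hc (meanPenalty_nonneg ν hρ)

theorem fDensity_groupMean_mul_le (hn : 0 ≤ n) (ν : Fin K → ℝ) {ρ : Fin K → ℝ}
    (hρ : ∀ k, ρ k ∈ Ico (0 : ℝ) 1) :
    fDensity K L x n σ (groupMean L x) ρ * fDensity K L x n σ ν 0 ≤
      fDensity K L x n σ ν ρ * fDensity K L x n σ (groupMean L x) 0 := by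
  have h0 : ∀ k, (0 : Fin K → ℝ) k ∈ Ico (0 : ℝ) 1 := fun _ ↦ ⟨le_rfl, one_pos⟩
  have hc : 0 ≤ n / (2 * σ ^ 2) := by positivity
  have hexp : exp (-(n / (2 * σ ^ 2)) * meanPenalty L x ν 0) ≤
      exp (-(n / (2 * σ ^ 2)) * meanPenalty L x ν ρ) :=
    exp_le_exp.2 <| mul_le_mul_of_nonpos_left
      (meanPenalty_le_meanPenalty_zero ν fun k ↦ (hρ k).1) (neg_nonpos.2 hc)
  have hprod : 0 ≤ fDensity K L x n σ (groupMean L x) ρ * fDensity K L x n σ (groupMean L x) 0 :=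
    mul_nonneg (fDensity_pos _ hρ).le (fDensity_pos _ h0).le
  rw [fDensity_eq_mul_exp ν hρ, fDensity_eq_mul_exp ν h0]
  linarith [mul_le_mul_of_nonneg_left hexp hprod]

end Density

theorem tildeV_eq_V_general (K : ℕ) (L : Fin (K + 1) → ℕ)
    (x : ℕ → ℝ) (n σ : ℝ) (hn : 0 < n) :
    sInf ((fun ν : Fin K → ℝ =>
        sSup ((fun ρ => fDensity K L x n σ ν ρ) '' {ρ | ∀ k, ρ k ∈ Ioo (0 : ℝ) 1}) /
          fDensity K L x n σ ν 0) '' univ) =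
      sSup ((fun p : (Fin K → ℝ) × (Fin K → ℝ) => fDensity K L x n σ p.1 p.2) ''
          {p | ∀ k, p.2 k ∈ Ioo (0 : ℝ) 1}) /
        sSup ((fun ν : Fin K → ℝ => fDensity K L x n σ ν 0) '' univ) := by
  have hΩ (ρ : Fin K → ℝ) (hρ : ∀ k, ρ k ∈ Ioo (0 : ℝ) 1) k : ρ k ∈ Ico (0 : ℝ) 1 :=
    Ioo_subset_Ico_self (hρ k)
  have h0 (k : Fin K) : (0 : Fin K → ℝ) k ∈ Ico (0 : ℝ) 1 := ⟨le_rfl, one_pos⟩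
  rw [image_univ, image_univ]
  exact sInf_sSup_div_eq_sSup_div_sSup ⟨fun _ ↦ 1 / 2, fun _ ↦ ⟨by norm_num, by norm_num⟩⟩
    (fun ν ↦ fDensity_pos ν h0)
    (fun ν ρ hρ ↦ fDensity_le_fDensity_groupMean hn.le ν (hΩ ρ hρ))
    (fun ν ↦ fDensity_le_fDensity_groupMean hn.le ν h0)
    (fun ν ρ hρ ↦ fDensity_groupMean_mul_le hn.le ν (hΩ ρ hρ))

/-- The two definitions of evidential value coincide: minimizing the likelihood ratio over
the nuisance mean parameters `ν` gives the same value as replacing them by their maximum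
likelihood estimators. -/
theorem tildeV_eq_V (K : ℕ) (hK : 1 ≤ K) (L : Fin (K + 1) → ℕ) (hL0 : L 0 = 0)
    (hLmono : StrictMono L) (hsize : ∀ k : Fin K, 2 ≤ L k.succ - L k.castSucc)
    (x : ℕ → ℝ) (n σ : ℝ) (hn : 0 < n) (hσ : 0 < σ) :
    sInf ((fun ν : Fin K → ℝ =>
        sSup ((fun ρ => fDensity K L x n σ ν ρ) '' {ρ | ∀ k, ρ k ∈ Ioo (0 : ℝ) 1}) /
          fDensity K L x n σ ν 0) '' univ) =
      sSup ((fun p : (Fin K → ℝ) × (Fin K → ℝ) => fDensity K L x n σ p.1 p.2) ''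
          {p | ∀ k, p.2 k ∈ Ioo (0 : ℝ) 1}) /
        sSup ((fun ν : Fin K → ℝ => fDensity K L x n σ ν 0) '' univ) :=
  tildeV_eq_V_general K L x n σ hn
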